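/- For every positive integer n, the Morris–Selberg constant at parameters a = 2, b = -1/2, c = 1/2 satisfies S_n(2, -1/2, 1/2) = 2^{-n} · ∏_{k=1}^{n} Cat(k); explicitly, (1/n!) ∏_{j=0}^{n-1} Γ(3/2 + (n-1+j)/2) Γ(1/2) / ( Γ(2 + j/2) Γ((1+j)/2) Γ(1/2 + j/2) ) = 2^{-n} ∏_{k=1}^{n} (2k)!/(k!·(k+1)!). Consequently, 2^{2·(1/2)·n(n-1) + 2n} · S_n(2, -1/2, 1/2) = 2^{n²} · ∏_{k=1}^{n} Cat(k). -/
import Mathlib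

open Real Finset

/-- The Morris–Selberg constant
`S_n(a,b,c) = (1/n!) ∏_{j=0}^{n-1} Γ(a+b+(n-1+j)c) Γ(c) / (Γ(a+jc) Γ(c+jc) Γ(b+jc+1))`. -/
noncomputable def morrisSelberg (n : ℕ) (a b c : ℝ) : ℝ :=
  (1 / (n.factorial : ℝ)) *
    ∏ j ∈ Finset.range n,
      (Real.Gamma (a + b + ((n : ℝ) - 1 + (j : ℝ)) * c) * Real.Gamma c) /
        (Real.Gamma (a + (j : ℝ) * c) * Real.Gamma (c + (j : ℝ) * c) *
          Real.Gamma (b + (j : ℝ) * c + 1))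

noncomputable def msA (n : ℕ) : ℝ := ∏ j ∈ Finset.range n, Real.Gamma (((n : ℝ) + 2 + j) / 2)

noncomputable def msC (j : ℕ) : ℝ :=
  Real.Gamma (1 / 2) /
    (Real.Gamma (2 + (j : ℝ) / 2) * Real.Gamma ((1 + (j : ℝ)) / 2) *
      Real.Gamma (1 / 2 + (j : ℝ) / 2))

lemma msA_rec (n : ℕ) :
    msA (n + 1) * Real.Gamma (((n : ℝ) + 2) / 2) =
      msA n * (Real.Gamma ((n : ℝ) + 1) * Real.Gamma ((n : ℝ) + 1 + 1 / 2)) := by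
  have h1 : ∏ j ∈ Finset.range (n + 2), Real.Gamma (((n : ℝ) + 2 + j) / 2)
      = msA n * (Real.Gamma ((n : ℝ) + 1) * Real.Gamma ((n : ℝ) + 1 + 1 / 2)) := by
    rw [Finset.prod_range_succ, Finset.prod_range_succ, mul_assoc]
    unfold msA
    congr 2
    · push_cast; ring
    · push_cast; ring
  have h2 : ∏ j ∈ Finset.range (n + 2), Real.Gamma (((n : ℝ) + 2 + j) / 2)
      = msA (n + 1) * Real.Gamma (((n : ℝ) + 2) / 2) := by
    rw [Finset.prod_range_succ']
    congr 1
    · unfold msA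
      refine Finset.prod_congr rfl fun j _ => ?_
      congr 1; push_cast; ring
    · norm_num
  rw [← h2, h1]

lemma ms_dup1 (n : ℕ) :
    Real.Gamma (((n : ℝ) + 1) / 2) * Real.Gamma (((n : ℝ) + 2) / 2)
      = (n.factorial : ℝ) * ((2 : ℝ) ^ n)⁻¹ * Real.sqrt π := by
  have h := Real.Gamma_mul_Gamma_add_half (((n : ℝ) + 1) / 2)
  have e1 : ((n : ℝ) + 1) / 2 + 1 / 2 = ((n : ℝ) + 2) / 2 := by ring
  have e2 : 2 * (((n : ℝ) + 1) / 2) = (n : ℝ) + 1 := by ring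
  have e3 : (1 : ℝ) - 2 * (((n : ℝ) + 1) / 2) = -(n : ℝ) := by ring
  rw [e1, e3, e2, Real.Gamma_nat_eq_factorial, Real.rpow_neg (by norm_num),
    Real.rpow_natCast] at h
  exact h

lemma ms_dup2 (n : ℕ) :
    Real.Gamma ((n : ℝ) + 1) * Real.Gamma ((n : ℝ) + 1 + 1 / 2)
      = ((2 * n + 1).factorial : ℝ) * ((2 : ℝ) ^ (2 * n + 1))⁻¹ * Real.sqrt π := by
  have h := Real.Gamma_mul_Gamma_add_half ((n : ℝ) + 1)
  have e2 : 2 * ((n : ℝ) + 1) = ((2 * n + 1 : ℕ) : ℝ) + 1 := by push_cast; ring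
  have e3 : (1 : ℝ) - 2 * ((n : ℝ) + 1) = -((2 * n + 1 : ℕ) : ℝ) := by push_cast; ring
  rw [e3, e2, Real.Gamma_nat_eq_factorial (2 * n + 1), Real.rpow_neg (by norm_num),
    Real.rpow_natCast] at h
  exact h

lemma ms_shift (n : ℕ) :
    Real.Gamma (2 + (n : ℝ) / 2) = (1 + (n : ℝ) / 2) * Real.Gamma (((n : ℝ) + 2) / 2) := by
  have e : (2 : ℝ) + (n : ℝ) / 2 = (1 + (n : ℝ) / 2) + 1 := by ring
  rw [e, Real.Gamma_add_one (by positivity)]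
  congr 1
  ring

lemma ms_ratio (n : ℕ) :
    Real.Gamma ((n : ℝ) + 1) * Real.Gamma ((n : ℝ) + 1 + 1 / 2) * msC n
      = ((n : ℝ) + 1) * (1 / 2) *
          (((2 * (n + 1)).factorial : ℝ) /
            (((n + 1).factorial : ℝ) * ((n + 2).factorial : ℝ))) *
        Real.Gamma (((n : ℝ) + 2) / 2) := by
  have hx : (0 : ℝ) < Real.Gamma (((n : ℝ) + 1) / 2) := Real.Gamma_pos_of_pos (by positivity)
  have hy : (0 : ℝ) < Real.Gamma (((n : ℝ) + 2) / 2) := Real.Gamma_pos_of_pos (by positivity)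
  have hπ : Real.sqrt π * Real.sqrt π = π := Real.mul_self_sqrt Real.pi_pos.le
  have heq1 : Real.Gamma ((1 + (n : ℝ)) / 2) = Real.Gamma (((n : ℝ) + 1) / 2) := by
    congr 1; ring
  have heq2 : Real.Gamma (1 / 2 + (n : ℝ) / 2) = Real.Gamma (((n : ℝ) + 1) / 2) := by
    congr 1; ring
  set x : ℝ := Real.Gamma (((n : ℝ) + 1) / 2) with hxdef
  set y : ℝ := Real.Gamma (((n : ℝ) + 2) / 2) with hydef
  set K : ℝ := ((n : ℝ) + 1) * (1 / 2) *
      (((2 * (n + 1)).factorial : ℝ) /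
        (((n + 1).factorial : ℝ) * ((n + 2).factorial : ℝ))) with hKdef
  have hnum : ((2 * n + 1).factorial : ℝ) * ((2 : ℝ) ^ (2 * n + 1))⁻¹
      = K * (1 + (n : ℝ) / 2) * ((n.factorial : ℝ) * ((2 : ℝ) ^ n)⁻¹) ^ 2 := by
    have h1 : (2 * (n + 1)).factorial = (2 * n + 2) * (2 * n + 1).factorial := by
      have h : 2 * (n + 1) = (2 * n + 1) + 1 := by ring
      rw [h, Nat.factorial_succ]
    have h2 : (n + 1).factorial = (n + 1) * n.factorial := rfl
    have h3 : (n + 2).factorial = (n + 2) * ((n + 1) * n.factorial) := by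
      rw [Nat.factorial_succ, h2]
    rw [hKdef, h1, h2, h3]
    have hf : (0 : ℝ) < (n.factorial : ℝ) := by exact_mod_cast n.factorial_pos
    push_cast
    field_simp
    ring
  have hxy : x * y = (n.factorial : ℝ) * ((2 : ℝ) ^ n)⁻¹ * Real.sqrt π := ms_dup1 n
  have hxy2 : (x * y) * (x * y) = ((n.factorial : ℝ) * ((2 : ℝ) ^ n)⁻¹) ^ 2 * π := by
    rw [hxy]
    calc ((n.factorial : ℝ) * ((2 : ℝ) ^ n)⁻¹ * Real.sqrt π) *
          ((n.factorial : ℝ) * ((2 : ℝ) ^ n)⁻¹ * Real.sqrt π)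
        = ((n.factorial : ℝ) * ((2 : ℝ) ^ n)⁻¹) ^ 2 * (Real.sqrt π * Real.sqrt π) := by ring
      _ = ((n.factorial : ℝ) * ((2 : ℝ) ^ n)⁻¹) ^ 2 * π := by rw [hπ]
  rw [msC, heq1, heq2, Real.Gamma_one_half_eq, ms_shift, ms_dup2]
  have hD0 : (1 + (n : ℝ) / 2) * y * x * x ≠ 0 := by positivity
  rw [← mul_div_assoc, div_eq_iff hD0]
  calc ((2 * n + 1).factorial : ℝ) * ((2 : ℝ) ^ (2 * n + 1))⁻¹ * Real.sqrt π * Real.sqrt π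
      = ((2 * n + 1).factorial : ℝ) * ((2 : ℝ) ^ (2 * n + 1))⁻¹ * (Real.sqrt π * Real.sqrt π) := by
        ring
    _ = ((2 * n + 1).factorial : ℝ) * ((2 : ℝ) ^ (2 * n + 1))⁻¹ * π := by rw [hπ]
    _ = K * (1 + (n : ℝ) / 2) * (((n.factorial : ℝ) * ((2 : ℝ) ^ n)⁻¹) ^ 2 * π) := by
        rw [hnum]; ring
    _ = K * (1 + (n : ℝ) / 2) * ((x * y) * (x * y)) := by rw [hxy2]
    _ = K * y * ((1 + (n : ℝ) / 2) * y * x * x) := by ring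

lemma ms_key (n : ℕ) :
    msA n * ∏ j ∈ Finset.range n, msC j
      = (n.factorial : ℝ) * (2 : ℝ) ^ (-(n : ℤ)) *
          ∏ k ∈ Finset.Icc 1 n,
            ((2 * k).factorial : ℝ) / ((k.factorial : ℝ) * ((k + 1).factorial : ℝ)) := by
  induction n with
  | zero => simp [msA]
  | succ n ih =>
    have hG : (0 : ℝ) < Real.Gamma (((n : ℝ) + 2) / 2) := Real.Gamma_pos_of_pos (by positivity)
    have hA := msA_rec n
    have hS := ms_ratio n
    have hz : (2 : ℝ) ^ (-((n : ℕ) + 1 : ℤ)) = (2 : ℝ) ^ (-(n : ℤ)) * 2⁻¹ := by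
      rw [show -((n : ℕ) + 1 : ℤ) = -(n : ℤ) + (-1) by ring, zpow_add₀ (two_ne_zero), zpow_neg_one]
    have hmain : msA (n + 1) * (∏ j ∈ Finset.range (n + 1), msC j) * Real.Gamma (((n : ℝ) + 2) / 2)
        = ((n + 1).factorial : ℝ) * (2 : ℝ) ^ (-((n : ℕ) + 1 : ℤ)) *
            (∏ k ∈ Finset.Icc 1 (n + 1),
              ((2 * k).factorial : ℝ) / ((k.factorial : ℝ) * ((k + 1).factorial : ℝ))) *
          Real.Gamma (((n : ℝ) + 2) / 2) := by
      rw [Finset.prod_range_succ, Finset.prod_Icc_succ_top (Nat.le_add_left 1 n)]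
      have lhs_eq : msA (n + 1) * ((∏ j ∈ Finset.range n, msC j) * msC n) *
            Real.Gamma (((n : ℝ) + 2) / 2)
          = (msA n * ∏ j ∈ Finset.range n, msC j) *
              (Real.Gamma ((n : ℝ) + 1) * Real.Gamma ((n : ℝ) + 1 + 1 / 2) * msC n) := by
        calc msA (n + 1) * ((∏ j ∈ Finset.range n, msC j) * msC n) *
              Real.Gamma (((n : ℝ) + 2) / 2)
            = (msA (n + 1) * Real.Gamma (((n : ℝ) + 2) / 2)) *
                ((∏ j ∈ Finset.range n, msC j) * msC n) := by ring
          _ = (msA n * (Real.Gamma ((n : ℝ) + 1) * Real.Gamma ((n : ℝ) + 1 + 1 / 2))) *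
                ((∏ j ∈ Finset.range n, msC j) * msC n) := by rw [hA]
          _ = _ := by ring
      rw [lhs_eq, ih, hS]
      have hfact : ((n + 1).factorial : ℝ) = ((n : ℝ) + 1) * (n.factorial : ℝ) := by
        push_cast [Nat.factorial_succ]; ring
      rw [hfact, hz]
      push_cast
      ring
    have := mul_right_cancel₀ hG.ne' hmain
    exact this

/-- **Evaluation of the Morris–Selberg constant at `a = 2`, `b = -1/2`, `c = 1/2`**:
`S_n(2, -1/2, 1/2) = 2^{-n} ∏_{k=1}^n Cat(k)`, explicitly
`(1/n!) ∏_{j=0}^{n-1} Γ(3/2+(n-1+j)/2) Γ(1/2) / (Γ(2+j/2) Γ((1+j)/2) Γ(1/2+j/2))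
  = 2^{-n} ∏_{k=1}^n (2k)!/(k!(k+1)!)`;
consequently `2^{2·(1/2)·n(n-1) + 2n} · S_n(2, -1/2, 1/2) = 2^{n²} ∏_{k=1}^n Cat(k)`. -/
theorem morrisSelberg_special_value (n : ℕ) (hn : 0 < n) :
    morrisSelberg n 2 (-(1 / 2)) (1 / 2) =
        (2 : ℝ) ^ (-(n : ℤ)) *
          ∏ k ∈ Finset.Icc 1 n,
            ((2 * k).factorial : ℝ) / ((k.factorial : ℝ) * ((k + 1).factorial : ℝ)) ∧
      (1 / (n.factorial : ℝ)) *
          ∏ j ∈ Finset.range n,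
            (Real.Gamma (3 / 2 + ((n : ℝ) - 1 + (j : ℝ)) / 2) * Real.Gamma (1 / 2)) /
              (Real.Gamma (2 + (j : ℝ) / 2) * Real.Gamma ((1 + (j : ℝ)) / 2) *
                Real.Gamma (1 / 2 + (j : ℝ) / 2)) =
        (2 : ℝ) ^ (-(n : ℤ)) *
          ∏ k ∈ Finset.Icc 1 n,
            ((2 * k).factorial : ℝ) / ((k.factorial : ℝ) * ((k + 1).factorial : ℝ)) ∧
      (2 : ℝ) ^ (2 * (1 / 2 : ℝ) * (n : ℝ) * ((n : ℝ) - 1) + 2 * (n : ℝ)) *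
          morrisSelberg n 2 (-(1 / 2)) (1 / 2) =
        (2 : ℝ) ^ (n ^ 2) *
          ∏ k ∈ Finset.Icc 1 n,
            ((2 * k).factorial : ℝ) / ((k.factorial : ℝ) * ((k + 1).factorial : ℝ)) := by
  have hf : ((n.factorial : ℝ)) ≠ 0 := by exact_mod_cast n.factorial_pos.ne'
  have hf : ((n.factorial : ℝ)) ≠ 0 := by exact_mod_cast n.factorial_pos.ne'
  have hprod : ∏ j ∈ Finset.range n,
      (Real.Gamma (3 / 2 + ((n : ℝ) - 1 + (j : ℝ)) / 2) * Real.Gamma (1 / 2)) /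
        (Real.Gamma (2 + (j : ℝ) / 2) * Real.Gamma ((1 + (j : ℝ)) / 2) *
          Real.Gamma (1 / 2 + (j : ℝ) / 2))
      = msA n * ∏ j ∈ Finset.range n, msC j := by
    rw [msA, ← Finset.prod_mul_distrib]
    refine Finset.prod_congr rfl fun j _ => ?_
    rw [msC]
    have e : (3 : ℝ) / 2 + ((n : ℝ) - 1 + (j : ℝ)) / 2 = ((n : ℝ) + 2 + (j : ℝ)) / 2 := by ring
    rw [e, mul_div_assoc]
  have h2 : (1 / (n.factorial : ℝ)) *
      ∏ j ∈ Finset.range n,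
        (Real.Gamma (3 / 2 + ((n : ℝ) - 1 + (j : ℝ)) / 2) * Real.Gamma (1 / 2)) /
          (Real.Gamma (2 + (j : ℝ) / 2) * Real.Gamma ((1 + (j : ℝ)) / 2) *
            Real.Gamma (1 / 2 + (j : ℝ) / 2))
      = (2 : ℝ) ^ (-(n : ℤ)) *
          ∏ k ∈ Finset.Icc 1 n,
            ((2 * k).factorial : ℝ) / ((k.factorial : ℝ) * ((k + 1).factorial : ℝ)) := by
    rw [hprod, ms_key]
    field_simp
  have h1 : morrisSelberg n 2 (-(1 / 2)) (1 / 2)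
      = (2 : ℝ) ^ (-(n : ℤ)) *
          ∏ k ∈ Finset.Icc 1 n,
            ((2 * k).factorial : ℝ) / ((k.factorial : ℝ) * ((k + 1).factorial : ℝ)) := by
    rw [← h2, morrisSelberg]
    congr 1
    refine Finset.prod_congr rfl fun j _ => ?_
    have e1 : (2 : ℝ) + -(1 / 2) + ((n : ℝ) - 1 + (j : ℝ)) * (1 / 2)
        = 3 / 2 + ((n : ℝ) - 1 + (j : ℝ)) / 2 := by ring
    have e2 : (2 : ℝ) + (j : ℝ) * (1 / 2) = 2 + (j : ℝ) / 2 := by ring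
    have e3 : (1 / 2 : ℝ) + (j : ℝ) * (1 / 2) = (1 + (j : ℝ)) / 2 := by ring
    have e4 : -(1 / 2 : ℝ) + (j : ℝ) * (1 / 2) + 1 = 1 / 2 + (j : ℝ) / 2 := by ring
    rw [e1, e2, e3, e4]
  refine ⟨h1, h2, ?_⟩
  have hexp : (2 : ℝ) ^ (2 * (1 / 2 : ℝ) * (n : ℝ) * ((n : ℝ) - 1) + 2 * (n : ℝ))
      = (2 : ℝ) ^ (n ^ 2) * (2 : ℝ) ^ n := by
    have e : 2 * (1 / 2 : ℝ) * (n : ℝ) * ((n : ℝ) - 1) + 2 * (n : ℝ)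
        = ((n ^ 2 + n : ℕ) : ℝ) := by push_cast; ring
    rw [e, Real.rpow_natCast, pow_add]
  have hcancel : (2 : ℝ) ^ n * (2 : ℝ) ^ (-(n : ℤ)) = 1 := by
    rw [← zpow_natCast (2 : ℝ) n, ← zpow_add₀ (two_ne_zero)]
    simp
  rw [hexp, h1]
  calc (2 : ℝ) ^ (n ^ 2) * (2 : ℝ) ^ n *
        ((2 : ℝ) ^ (-(n : ℤ)) *
          ∏ k ∈ Finset.Icc 1 n,
            ((2 * k).factorial : ℝ) / ((k.factorial : ℝ) * ((k + 1).factorial : ℝ)))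
      = (2 : ℝ) ^ (n ^ 2) * ((2 : ℝ) ^ n * (2 : ℝ) ^ (-(n : ℤ))) *
          ∏ k ∈ Finset.Icc 1 n,
            ((2 * k).factorial : ℝ) / ((k.factorial : ℝ) * ((k + 1).factorial : ℝ)) := by ring
    _ = (2 : ℝ) ^ (n ^ 2) *
          ∏ k ∈ Finset.Icc 1 n,
            ((2 * k).factorial : ℝ) / ((k.factorial : ℝ) * ((k + 1).factorial : ℝ)) := by
        rw [hcancel, mul_one]
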